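/- Let t₀ ∈ ℝ and let F: [-π/2, π/2] × (-∞, t₀] → ℝ be continuous, twice continuously differentiable in ψ up to the endpoints and continuously differentiable in t, with all these derivatives jointly continuous, and with ∂_ψ F(±π/2, t) = 0 for every t ≤ t₀. Let a: (-π/2, π/2) × (-∞, t₀] → ℝ be continuous, bounded, and nonnegative, and assume ∂_t F(ψ, t) ≤ a(ψ, t)·(∂_ψψ F(ψ, t) - tan(ψ)·∂_ψ F(ψ, t)) for all (ψ,t) ∈ (-π/2, π/2) × (-∞, t₀]. Then t ↦ max_{ψ ∈ [-π/2, π/2]} F(ψ, t) is nonincreasing on (-∞, t₀]: for all t₁ ≤ t₂ ≤ t₀, max_ψ F(ψ, t₂) ≤ max_ψ F(ψ, t₁). -/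

import Mathlib

/-!
For `ε > 0` consider a maximum of `F - ε t` on `[-π/2, π/2] × [t₁, t]`. If it sits at a time
`s > t₁`, then `∂_t F ≥ ε` there, and `ψ` is a spatial maximum of `F(·, s)`. In the interior this
gives `F_ψ = 0`, `F_ψψ ≤ 0`, so `F_t ≤ a ΔF ≤ 0`. At a pole the inequality is not available, but
`F_ψ(π/2) = 0` and `F_ψψ(π/2) ≤ 0` give `F_ψψ < δ` and `-F_ψ(ψ) ≤ δ (π/2 - ψ)` nearby, and
`tan ψ (π/2 - ψ) ≤ 1`, so `ΔF ≤ 2δ` at interior points close to the pole; as `a` is bounded and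
`F_t` is continuous, `F_t ≤ a ΔF` there still contradicts `F_t ≥ ε`. So the maximum is attained at
time `t₁`, and `ε → 0` gives the claim for `t₂ < t₀`; the case `t₂ = t₀` follows by continuity.
-/

open Real Set

/-- First spatial derivative `∂_ψ F`. -/
noncomputable def dps (F : ℝ → ℝ → ℝ) (ψ t : ℝ) : ℝ := deriv (fun s => F s t) ψ

/-- Second spatial derivative `∂_ψψ F`. -/
noncomputable def dpsps (F : ℝ → ℝ → ℝ) (ψ t : ℝ) : ℝ := deriv (deriv (fun s => F s t)) ψ

/-- Time derivative `∂_t F`. -/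
noncomputable def dtime (F : ℝ → ℝ → ℝ) (ψ t : ℝ) : ℝ := deriv (fun s => F ψ s) t

open Filter Topology

/-- The Laplacian of `S²` on functions of the latitude `ψ ∈ (-π/2, π/2)` alone. -/
noncomputable def sphericalLaplacian (f : ℝ → ℝ) (ψ : ℝ) : ℝ :=
  deriv (deriv f) ψ - tan ψ * deriv f ψ

theorem deriv_deriv_comp_neg {𝕜 E : Type*} [NontriviallyNormedField 𝕜] [NormedAddCommGroup E]
    [NormedSpace 𝕜 E] (f : 𝕜 → E) :
    deriv (deriv fun x => f (-x)) = fun x => deriv (deriv f) (-x) := by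
  funext x
  have hderiv : deriv (fun x => f (-x)) = fun x => -deriv f (-x) :=
    funext fun y => deriv_comp_neg f y
  rw [hderiv, deriv.fun_neg, deriv_comp_neg (deriv f), neg_neg]

theorem sphericalLaplacian_comp_neg (f : ℝ → ℝ) (ψ : ℝ) :
    sphericalLaplacian (fun x => f (-x)) ψ = sphericalLaplacian f (-ψ) := by
  simp only [sphericalLaplacian, deriv_deriv_comp_neg, deriv_comp_neg, tan_neg]
  ring

theorem tan_mul_pi_div_two_sub_le_one {ψ : ℝ} (h0 : 0 < ψ) (h1 : ψ < π / 2) :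
    tan ψ * (π / 2 - ψ) ≤ 1 := by
  have htan := tan_pos_of_pos_of_lt_pi_div_two h0 h1
  have hle : π / 2 - ψ ≤ (tan ψ)⁻¹ := by
    rw [← tan_pi_div_two_sub]
    exact le_tan (by linarith) (by linarith)
  calc tan ψ * (π / 2 - ψ) ≤ tan ψ * (tan ψ)⁻¹ := by gcongr
    _ = 1 := mul_inv_cancel₀ htan.ne'

theorem hasDerivAt_deriv_of_contDiffOn {𝕜 E : Type*} [NontriviallyNormedField 𝕜]
    [NormedAddCommGroup E] [NormedSpace 𝕜 E] {f : 𝕜 → E} {s : Set 𝕜} {x : 𝕜}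
    (hf : ContDiffOn 𝕜 2 f s) (hx : s ∈ 𝓝 x) : HasDerivAt (deriv f) (deriv (deriv f) x) x := by
  obtain ⟨t, hts, ht, hxt⟩ := mem_nhds_iff.1 hx
  have hf' : ContDiffOn 𝕜 1 (deriv f) t := (hf.mono hts).deriv_of_isOpen ht (by norm_num)
  exact ((hf'.differentiableOn one_ne_zero).differentiableAt (ht.mem_nhds hxt)).hasDerivAt

theorem deriv_deriv_nonpos_of_isMaxOn_Icc {f : ℝ → ℝ} {a x : ℝ} (hax : a < x)
    (hf : ContinuousOn f (Icc a x)) (hf' : ContinuousOn (deriv f) (Icc a x))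
    (hf'' : ContinuousWithinAt (deriv (deriv f)) (Icc a x) x)
    (hx : deriv f x = 0) (hmax : IsMaxOn f (Icc a x) x) : deriv (deriv f) x ≤ 0 := by
  by_contra! hpos
  have hnear : ∀ᶠ y in 𝓝[≤] x, 0 < deriv (deriv f) y := by
    rw [← nhdsWithin_Icc_eq_nhdsLE hax]
    exact hf''.eventually (lt_mem_nhds hpos)
  obtain ⟨l, hlx, hl⟩ := mem_nhdsLE_iff_exists_Icc_subset.1 hnear
  set b := max a l
  have hb : b ∈ Icc a x := ⟨le_max_left a l, max_le hax.le hlx.le⟩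
  have hbx : b < x := max_lt hax hlx
  have hsub : Icc b x ⊆ Icc a x := Icc_subset_Icc_left (le_max_left a l)
  have hmono : StrictMonoOn (deriv f) (Icc b x) := by
    refine strictMonoOn_of_deriv_pos (convex_Icc b x) (hf'.mono hsub) fun y hy => ?_
    rw [interior_Icc] at hy
    exact hl ⟨(le_max_right a l).trans hy.1.le, hy.2.le⟩
  have hanti : StrictAntiOn f (Icc b x) := by
    refine strictAntiOn_of_deriv_neg (convex_Icc b x) (hf.mono hsub) fun y hy => ?_
    rw [interior_Icc] at hy
    exact hx ▸ hmono ⟨hy.1.le, hy.2.le⟩ (right_mem_Icc.2 hbx.le) hy.2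
  exact (hanti (left_mem_Icc.2 hbx.le) (right_mem_Icc.2 hbx.le) hbx).not_ge (hmax hb)

theorem eventually_sphericalLaplacian_le_of_isMaxOn_pi_div_two {f : ℝ → ℝ}
    (hf : ContDiffOn ℝ 2 f (Icc (-(π / 2)) (π / 2)))
    (hf' : ContinuousOn (deriv f) (Icc (-(π / 2)) (π / 2)))
    (hf'' : ContinuousOn (deriv (deriv f)) (Icc (-(π / 2)) (π / 2)))
    (hpole : deriv f (π / 2) = 0) (hmax : IsMaxOn f (Icc (-(π / 2)) (π / 2)) (π / 2))
    {δ : ℝ} (hδ : 0 < δ) :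
    ∀ᶠ ψ in 𝓝[<] (π / 2), sphericalLaplacian f ψ ≤ 2 * δ := by
  have hpi : -(π / 2) < π / 2 := by linarith [pi_pos]
  have hmem : π / 2 ∈ Icc (-(π / 2)) (π / 2) := right_mem_Icc.2 hpi.le
  have hneg : deriv (deriv f) (π / 2) ≤ 0 :=
    deriv_deriv_nonpos_of_isMaxOn_Icc hpi hf.continuousOn hf' (hf''.continuousWithinAt hmem)
      hpole hmax
  have hnear : ∀ᶠ y in 𝓝[≤] (π / 2), deriv (deriv f) y < δ := by
    rw [← nhdsWithin_Icc_eq_nhdsLE hpi]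
    exact (hf''.continuousWithinAt hmem).eventually (gt_mem_nhds (by linarith))
  obtain ⟨l, hl, hlδ⟩ := mem_nhdsLE_iff_exists_Icc_subset.1 hnear
  filter_upwards [Ioo_mem_nhdsLT (show max l 0 < π / 2 from max_lt hl (by linarith))] with ψ hψ
  have hψl : l < ψ := (le_max_left l 0).trans_lt hψ.1
  have hψ0 : 0 < ψ := (le_max_right l 0).trans_lt hψ.1
  obtain ⟨c, hc, hslope⟩ := exists_deriv_eq_slope (deriv f) hψ.2
    (hf'.mono (Icc_subset_Icc_left (by linarith)))
    fun y hy => (hasDerivAt_deriv_of_contDiffOn hf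
      (Icc_mem_nhds (by linarith [hy.1]) hy.2)).differentiableAt.differentiableWithinAt
  have hslope_le : -deriv f ψ ≤ δ * (π / 2 - ψ) := by
    rw [hpole, eq_div_iff (by linarith [hψ.2])] at hslope
    have hcδ : deriv (deriv f) c < δ := hlδ ⟨by linarith [hc.1], hc.2.le⟩
    calc -deriv f ψ = deriv (deriv f) c * (π / 2 - ψ) := by linarith
      _ ≤ δ * (π / 2 - ψ) := by gcongr; linarith [hψ.2]
  have htan : 0 ≤ tan ψ := (tan_pos_of_pos_of_lt_pi_div_two hψ0 hψ.2).le
  calc sphericalLaplacian f ψ = deriv (deriv f) ψ + tan ψ * -deriv f ψ := by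
        rw [sphericalLaplacian]; ring
    _ ≤ δ + tan ψ * (δ * (π / 2 - ψ)) := by
        gcongr
        exact (hlδ ⟨hψl.le, hψ.2.le⟩).le
    _ = δ + δ * (tan ψ * (π / 2 - ψ)) := by ring
    _ ≤ δ + δ * 1 := by grw [tan_mul_pi_div_two_sub_le_one hψ0 hψ.2]
    _ = 2 * δ := by ring

theorem eventually_sphericalLaplacian_le_of_isMaxOn_neg_pi_div_two {f : ℝ → ℝ}
    (hf : ContDiffOn ℝ 2 f (Icc (-(π / 2)) (π / 2)))
    (hf' : ContinuousOn (deriv f) (Icc (-(π / 2)) (π / 2)))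
    (hf'' : ContinuousOn (deriv (deriv f)) (Icc (-(π / 2)) (π / 2)))
    (hpole : deriv f (-(π / 2)) = 0) (hmax : IsMaxOn f (Icc (-(π / 2)) (π / 2)) (-(π / 2)))
    {δ : ℝ} (hδ : 0 < δ) :
    ∀ᶠ ψ in 𝓝[>] (-(π / 2)), sphericalLaplacian f ψ ≤ 2 * δ := by
  have hmaps : MapsTo (fun x : ℝ => -x) (Icc (-(π / 2)) (π / 2)) (Icc (-(π / 2)) (π / 2)) :=
    fun x hx => ⟨neg_le_neg hx.2, by linarith [hx.1]⟩
  have hderiv : deriv (fun x => f (-x)) = fun x => -deriv f (-x) :=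
    funext fun y => deriv_comp_neg f y
  have hreflected := eventually_sphericalLaplacian_le_of_isMaxOn_pi_div_two (f := fun x => f (-x))
    (hf.comp contDiff_neg.contDiffOn hmaps)
    (hderiv ▸ (hf'.comp continuous_neg.continuousOn hmaps).neg)
    ((deriv_deriv_comp_neg f).symm ▸ hf''.comp continuous_neg.continuousOn hmaps)
    (by rw [hderiv]; simp [hpole]) (fun x hx => hmax (hmaps hx)) hδ
  have hflip : Tendsto (fun x : ℝ => -x) (𝓝[>] (-(π / 2))) (𝓝[<] (π / 2)) := by
    simpa using tendsto_neg_nhdsGT (a := -(π / 2))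
  exact (hflip.eventually hreflected).mono fun ψ h => by
    rwa [sphericalLaplacian_comp_neg, neg_neg] at h

theorem frequently_sphericalLaplacian_le_of_isMaxOn {f : ℝ → ℝ}
    (hf : ContDiffOn ℝ 2 f (Icc (-(π / 2)) (π / 2)))
    (hf' : ContinuousOn (deriv f) (Icc (-(π / 2)) (π / 2)))
    (hf'' : ContinuousOn (deriv (deriv f)) (Icc (-(π / 2)) (π / 2)))
    (hpole : deriv f (-(π / 2)) = 0 ∧ deriv f (π / 2) = 0) {x₀ δ : ℝ}
    (hx₀ : x₀ ∈ Icc (-(π / 2)) (π / 2)) (hmax : IsMaxOn f (Icc (-(π / 2)) (π / 2)) x₀)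
    (hδ : 0 < δ) :
    ∃ᶠ ψ in 𝓝 x₀, ψ ∈ Ioo (-(π / 2)) (π / 2) ∧ sphericalLaplacian f ψ ≤ δ := by
  have hpi : -(π / 2) < π / 2 := by linarith [pi_pos]
  rcases hx₀.2.eq_or_lt with rfl | hright
  · refine (Eventually.frequently (f := 𝓝[<] (π / 2)) ?_).filter_mono nhdsWithin_le_nhds
    filter_upwards [Ioo_mem_nhdsLT hpi, eventually_sphericalLaplacian_le_of_isMaxOn_pi_div_two
      hf hf' hf'' hpole.2 hmax (half_pos hδ)] with ψ hψ hlap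
    exact ⟨hψ, by linarith⟩
  rcases hx₀.1.eq_or_lt with rfl | hleft
  · refine (Eventually.frequently (f := 𝓝[>] (-(π / 2))) ?_).filter_mono nhdsWithin_le_nhds
    filter_upwards [Ioo_mem_nhdsGT hpi, eventually_sphericalLaplacian_le_of_isMaxOn_neg_pi_div_two
      hf hf' hf'' hpole.1 hmax (half_pos hδ)] with ψ hψ hlap
    exact ⟨hψ, by linarith⟩
  have hsub : Icc (-(π / 2)) x₀ ⊆ Icc (-(π / 2)) (π / 2) := Icc_subset_Icc_right hright.le
  have hcrit : deriv f x₀ = 0 := (hmax.isLocalMax (Icc_mem_nhds hleft hright)).deriv_eq_zero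
  have hsecond : deriv (deriv f) x₀ ≤ 0 :=
    deriv_deriv_nonpos_of_isMaxOn_Icc hleft (hf.continuousOn.mono hsub) (hf'.mono hsub)
      ((hf''.mono hsub).continuousWithinAt (right_mem_Icc.2 hleft.le)) hcrit (hmax.on_subset hsub)
  refine mem_closure_iff_frequently.1 (subset_closure ⟨⟨hleft, hright⟩, ?_⟩)
  rw [sphericalLaplacian, hcrit, mul_zero, sub_zero]
  exact hsecond.trans hδ.le

theorem nonpos_of_isMaxOn_of_le_mul_sphericalLaplacian {f u a : ℝ → ℝ} {C x₀ : ℝ}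
    (hf : ContDiffOn ℝ 2 f (Icc (-(π / 2)) (π / 2)))
    (hf' : ContinuousOn (deriv f) (Icc (-(π / 2)) (π / 2)))
    (hf'' : ContinuousOn (deriv (deriv f)) (Icc (-(π / 2)) (π / 2)))
    (hpole : deriv f (-(π / 2)) = 0 ∧ deriv f (π / 2) = 0)
    (hu : ContinuousOn u (Icc (-(π / 2)) (π / 2)))
    (ha : ∀ ψ ∈ Ioo (-(π / 2)) (π / 2), 0 ≤ a ψ) (haC : ∀ ψ ∈ Ioo (-(π / 2)) (π / 2), a ψ ≤ C)
    (hineq : ∀ ψ ∈ Ioo (-(π / 2)) (π / 2), u ψ ≤ a ψ * sphericalLaplacian f ψ)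
    (hx₀ : x₀ ∈ Icc (-(π / 2)) (π / 2)) (hmax : IsMaxOn f (Icc (-(π / 2)) (π / 2)) x₀) :
    u x₀ ≤ 0 := by
  by_contra! hpos
  obtain ⟨δ, hδ, hCδ⟩ := exists_pos_mul_lt (half_pos hpos) C
  have hu_near : ∀ᶠ ψ in 𝓝 x₀, ψ ∈ Icc (-(π / 2)) (π / 2) → u x₀ / 2 < u ψ :=
    eventually_nhdsWithin_iff.1 ((hu x₀ hx₀).eventually (lt_mem_nhds (half_lt_self hpos)))
  obtain ⟨ψ, ⟨hψ, hlap⟩, hlarge⟩ :=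
    ((frequently_sphericalLaplacian_le_of_isMaxOn hf hf' hf'' hpole hx₀ hmax hδ).and_eventually
      hu_near).exists
  have hψa := ha ψ hψ
  have hsmall : u ψ ≤ C * δ :=
    calc u ψ ≤ a ψ * sphericalLaplacian f ψ := hineq ψ hψ
      _ ≤ a ψ * δ := by gcongr
      _ ≤ C * δ := by gcongr; exact haC ψ hψ
  linarith [hlarge (Ioo_subset_Icc_self hψ)]

theorem nonneg_of_hasDerivAt_of_isMaxOn_Icc {φ : ℝ → ℝ} {a s d : ℝ} (has : a < s)
    (hφ : HasDerivWithinAt φ d (Icc a s) s) (hmax : IsMaxOn φ (Icc a s) s) : 0 ≤ d := by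
  have hcone : a - s ∈ posTangentConeAt (Icc a s) s :=
    sub_mem_posTangentConeAt_of_segment_subset
      ((convex_Icc a s).segment_subset (right_mem_Icc.2 has.le) (left_mem_Icc.2 has.le))
  have hnonpos : (a - s) * d ≤ 0 := by
    simpa using hmax.localize.hasFDerivWithinAt_nonpos hφ.hasFDerivWithinAt hcone
  nlinarith

theorem le_sSup_image_of_deriv_nonpos_of_isMaxOn {X : Type*} [TopologicalSpace X] {K : Set X}
    (hK : IsCompact K) {G G' : X → ℝ → ℝ} {t₁ t : ℝ} (ht : t₁ ≤ t)
    (hG : ContinuousOn (fun p : X × ℝ => G p.1 p.2) (K ×ˢ Icc t₁ t))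
    (hG' : ∀ x ∈ K, ∀ s ∈ Ioc t₁ t, HasDerivAt (G x) (G' x s) s)
    (hmax : ∀ x ∈ K, ∀ s ∈ Ioc t₁ t, IsMaxOn (G · s) K x → G' x s ≤ 0) {x : X} (hx : x ∈ K) :
    G x t ≤ sSup ((G · t₁) '' K) := by
  set M := sSup ((G · t₁) '' K)
  have hbdd : BddAbove ((G · t₁) '' K) :=
    hK.bddAbove_image (hG.uncurry_right (f := G) t₁ (left_mem_Icc.2 ht))
  have hε : ∀ ε > 0, G x t ≤ M + ε * (t - t₁) := by
    intro ε hε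
    obtain ⟨⟨y, s⟩, ⟨hy, hs⟩, hys⟩ := (hK.prod isCompact_Icc).exists_isMaxOn
      (Set.Nonempty.prod ⟨x, hx⟩ (nonempty_Icc.2 ht)) (f := fun p : X × ℝ => G p.1 p.2 - ε * p.2)
      (hG.sub (by fun_prop))
    have hH : ∀ z ∈ K, ∀ r ∈ Icc t₁ t, G z r - ε * r ≤ G y s - ε * s :=
      fun z hz r hr => isMaxOn_iff.1 hys (z, r) ⟨hz, hr⟩
    rcases hs.1.eq_or_lt with rfl | hs₁
    · linarith [hH x hx t (right_mem_Icc.2 ht), le_csSup hbdd (mem_image_of_mem _ hy)]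
    have hspace : IsMaxOn (G · s) K y := isMaxOn_iff.2 fun z hz => by
      linarith [hH z hz s hs]
    have hgrowth : 0 ≤ G' y s - ε :=
      nonneg_of_hasDerivAt_of_isMaxOn_Icc hs₁
        ((hG' y hy s ⟨hs₁, hs.2⟩).sub (hasDerivAt_const_mul ε)).hasDerivWithinAt
        (isMaxOn_iff.2 fun r hr => hH y hy r ⟨hr.1, hr.2.trans hs.2⟩)
    linarith [hmax y hy s ⟨hs₁, hs.2⟩ hspace]
  have hlim : Tendsto (fun ε => M + ε * (t - t₁)) (𝓝[>] 0) (𝓝 M) := by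
    have hcont : Continuous fun ε : ℝ => M + ε * (t - t₁) := by fun_prop
    simpa using (hcont.tendsto 0).mono_left nhdsWithin_le_nhds
  exact ge_of_tendsto hlim (eventually_nhdsWithin_of_forall hε)

theorem max_principle_sphere_general
    (t₀ : ℝ) (F : ℝ → ℝ → ℝ)
    (hcont : ContinuousOn (fun p : ℝ × ℝ => F p.1 p.2)
      (Set.Icc (-(π / 2)) (π / 2) ×ˢ Set.Iic t₀))
    (hψreg : ∀ t ≤ t₀, ContDiffOn ℝ 2 (fun ψ => F ψ t) (Set.Icc (-(π / 2)) (π / 2)))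
    (htreg : ∀ ψ ∈ Set.Icc (-(π / 2)) (π / 2), ContDiffOn ℝ 1 (fun s => F ψ s) (Set.Iic t₀))
    (hjc1 : ContinuousOn (fun p : ℝ × ℝ => dps F p.1 p.2)
      (Set.Icc (-(π / 2)) (π / 2) ×ˢ Set.Iic t₀))
    (hjc2 : ContinuousOn (fun p : ℝ × ℝ => dpsps F p.1 p.2)
      (Set.Icc (-(π / 2)) (π / 2) ×ˢ Set.Iic t₀))
    (hjc3 : ContinuousOn (fun p : ℝ × ℝ => dtime F p.1 p.2)
      (Set.Icc (-(π / 2)) (π / 2) ×ˢ Set.Iic t₀))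
    (hpole : ∀ t ≤ t₀, dps F (-(π / 2)) t = 0 ∧ dps F (π / 2) t = 0)
    (a : ℝ → ℝ → ℝ)
    (habdd : ∃ Ca : ℝ, ∀ ψ ∈ Set.Ioo (-(π / 2)) (π / 2), ∀ t ≤ t₀, a ψ t ≤ Ca)
    (hapos : ∀ ψ ∈ Set.Ioo (-(π / 2)) (π / 2), ∀ t ≤ t₀, 0 ≤ a ψ t)
    (hineq : ∀ ψ ∈ Set.Ioo (-(π / 2)) (π / 2), ∀ t ≤ t₀,
      dtime F ψ t ≤ a ψ t * (dpsps F ψ t - Real.tan ψ * dps F ψ t)) :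
    ∀ t₁ t₂ : ℝ, t₁ ≤ t₂ → t₂ ≤ t₀ →
      sSup ((fun ψ => F ψ t₂) '' Set.Icc (-(π / 2)) (π / 2)) ≤
        sSup ((fun ψ => F ψ t₁) '' Set.Icc (-(π / 2)) (π / 2)) := by
  intro t₁ t₂ h12 h20
  rcases h12.eq_or_lt with rfl | h12
  · exact le_rfl
  obtain ⟨C, hC⟩ := habdd
  have hbefore : ∀ t, t₁ ≤ t → t < t₀ → ∀ ψ ∈ Icc (-(π / 2)) (π / 2),
      F ψ t ≤ sSup ((fun ψ => F ψ t₁) '' Icc (-(π / 2)) (π / 2)) := by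
    intro t ht₁ ht₀ ψ hψ
    refine le_sSup_image_of_deriv_nonpos_of_isMaxOn isCompact_Icc ht₁
      (hcont.mono (prod_mono_right fun s hs => hs.2.trans ht₀.le)) (G' := dtime F)
      (fun x hx s hs => ?_) (fun x hx s hs hmax => ?_) hψ
    · exact (((htreg x hx).differentiableOn one_ne_zero).differentiableAt
        (Iic_mem_nhds (hs.2.trans_lt ht₀))).hasDerivAt
    · have hs₀ : s ≤ t₀ := hs.2.trans ht₀.le
      exact nonpos_of_isMaxOn_of_le_mul_sphericalLaplacian (u := (dtime F · s)) (hψreg s hs₀)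
        (hjc1.uncurry_right (f := dps F) s hs₀) (hjc2.uncurry_right (f := dpsps F) s hs₀)
        (hpole s hs₀) (hjc3.uncurry_right (f := dtime F) s hs₀) (hapos · · s hs₀)
        (hC · · s hs₀) (hineq · · s hs₀) hx hmax
  have hall : ∀ ψ ∈ Icc (-(π / 2)) (π / 2),
      F ψ t₂ ≤ sSup ((fun ψ => F ψ t₁) '' Icc (-(π / 2)) (π / 2)) := by
    intro ψ hψ
    rcases h20.lt_or_eq with h20 | rfl
    · exact hbefore t₂ h12.le h20 ψ hψ
    have hleft : ContinuousWithinAt (F ψ) (Iio t₂) t₂ :=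
      ((hcont.uncurry_left (f := F) ψ hψ).continuousWithinAt self_mem_Iic).mono
        Iio_subset_Iic_self
    refine le_of_tendsto hleft ?_
    filter_upwards [Ioo_mem_nhdsLT h12] with s hs using hbefore s hs.1.le hs.2 ψ hψ
  exact csSup_le ((nonempty_Icc.2 (by linarith [pi_pos])).image _) (forall_mem_image.2 hall)

/-- Maximum principle on the sphere: if `F_t ≤ a·(F_ψψ - tan ψ · F_ψ)` with `a ≥ 0`
bounded, and `F` is smooth at the poles (`F_ψ(±π/2, t) = 0`), then the spatial
maximum of `F` is nonincreasing in time. -/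
theorem max_principle_sphere
    (t₀ : ℝ) (F : ℝ → ℝ → ℝ)
    (hcont : ContinuousOn (fun p : ℝ × ℝ => F p.1 p.2)
      (Set.Icc (-(π / 2)) (π / 2) ×ˢ Set.Iic t₀))
    (hψreg : ∀ t ≤ t₀, ContDiffOn ℝ 2 (fun ψ => F ψ t) (Set.Icc (-(π / 2)) (π / 2)))
    (htreg : ∀ ψ ∈ Set.Icc (-(π / 2)) (π / 2), ContDiffOn ℝ 1 (fun s => F ψ s) (Set.Iic t₀))
    (hjc1 : ContinuousOn (fun p : ℝ × ℝ => dps F p.1 p.2)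
      (Set.Icc (-(π / 2)) (π / 2) ×ˢ Set.Iic t₀))
    (hjc2 : ContinuousOn (fun p : ℝ × ℝ => dpsps F p.1 p.2)
      (Set.Icc (-(π / 2)) (π / 2) ×ˢ Set.Iic t₀))
    (hjc3 : ContinuousOn (fun p : ℝ × ℝ => dtime F p.1 p.2)
      (Set.Icc (-(π / 2)) (π / 2) ×ˢ Set.Iic t₀))
    (hpole : ∀ t ≤ t₀, dps F (-(π / 2)) t = 0 ∧ dps F (π / 2) t = 0)
    (a : ℝ → ℝ → ℝ)
    (hacont : ContinuousOn (fun p : ℝ × ℝ => a p.1 p.2)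
      (Set.Ioo (-(π / 2)) (π / 2) ×ˢ Set.Iic t₀))
    (habdd : ∃ Ca : ℝ, ∀ ψ ∈ Set.Ioo (-(π / 2)) (π / 2), ∀ t ≤ t₀, a ψ t ≤ Ca)
    (hapos : ∀ ψ ∈ Set.Ioo (-(π / 2)) (π / 2), ∀ t ≤ t₀, 0 ≤ a ψ t)
    (hineq : ∀ ψ ∈ Set.Ioo (-(π / 2)) (π / 2), ∀ t ≤ t₀,
      dtime F ψ t ≤ a ψ t * (dpsps F ψ t - Real.tan ψ * dps F ψ t)) :
    ∀ t₁ t₂ : ℝ, t₁ ≤ t₂ → t₂ ≤ t₀ →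
      sSup ((fun ψ => F ψ t₂) '' Set.Icc (-(π / 2)) (π / 2)) ≤
        sSup ((fun ψ => F ψ t₁) '' Set.Icc (-(π / 2)) (π / 2)) :=
  max_principle_sphere_general t₀ F hcont hψreg htreg hjc1 hjc2 hjc3 hpole a habdd hapos hineq
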